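/- Let I = (G,q,π) be an instance of Unique Label Cover with φ_G ≥ φ for some φ > 0, and let G' be its label-extended graph. Then every nonempty subset S' of the vertex set of G' with μ_{G'}(S') ≤ μ_{G'}/(q+1) satisfies φ_{G'}(S') ≥ φ/(q(q+1)); that is, φ_{G'}(q+1) ≥ φ/(q(q+1)). -/

import Mathlib

/-!
Let `S ⊆ V` be the projection of `S' ⊆ V × [q]`. Since every vertex `(u, i)` has the degree of
`u`, `μ_G(S) ≤ μ_{G'}(S') ≤ q μ_G(S)`, and the bound `μ_{G'}(S') ≤ q μ_G / (q + 1)` then gives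
`μ_G(V ∖ S) ≥ μ_{G'}(S') / q` as well. Every edge of `G` leaving `S` lifts to an edge of `G'`
leaving `S'`, so `e_{G'}(S', S'ᶜ) ≥ e_G(S, Sᶜ) ≥ φ_G · μ_{G'}(S') / q`, that is,
`φ_{G'}(S') ≥ φ_G / q`.
-/

open scoped Classical
open Matrix

noncomputable section

namespace Sublinear

variable {V : Type*}

/-- The degree `d(v)` of a vertex, as a real number. -/
def deg [Fintype V] (G : SimpleGraph V) (v : V) : ℝ :=
  ((Finset.univ.filter fun u => G.Adj v u).card : ℝ)

/-- The volume `μ_G(S)` of a set of vertices. -/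
def vol [Fintype V] (G : SimpleGraph V) (S : Set V) : ℝ :=
  ∑ v ∈ Finset.univ.filter (fun v => v ∈ S), deg G v

/-- The number of ordered adjacent pairs `(u,v)` with `u ∈ S`, `v ∈ T`.
For disjoint `S`, `T` this equals the number `e_G(S,T)` of edges between `S` and `T`. -/
def eB [Fintype V] (G : SimpleGraph V) (S T : Set V) : ℝ :=
  (((Finset.univ : Finset (V × V)).filter
      fun p => p.1 ∈ S ∧ p.2 ∈ T ∧ G.Adj p.1 p.2).card : ℝ)

/-- The number `e_G(S)` of edges with both endpoints in `S`. -/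
def eIn [Fintype V] (G : SimpleGraph V) (S : Set V) : ℝ := eB G S S / 2

/-- The conductance `φ_G(S)` of a set of vertices. -/
def cond [Fintype V] (G : SimpleGraph V) (S : Set V) : ℝ :=
  eB G S Sᶜ / vol G S

/-- The conductance `φ_G` of the graph: the minimum of `φ_G(S)` over nonempty `S`
with `μ_G(S) ≤ μ_G/2`. -/
def conductance [Fintype V] (G : SimpleGraph V) : ℝ :=
  sInf {x | ∃ S : Set V, S.Nonempty ∧ vol G S ≤ vol G Set.univ / 2 ∧ x = cond G S}

/-- The label-extended graph `G'` of a Unique Label Cover instance `I = (G, q, π)`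
(with labels `Fin q`): vertices are pairs `(u,i)`, and `(u,i)` is adjacent to
`(v,j)` iff `{u,v}` is an edge of `G` and `j = π u v i`. -/
def ulcExt {V : Type*} (G : SimpleGraph V) {q : ℕ} (π : V → V → Equiv.Perm (Fin q))
    (hπ : ∀ u v, G.Adj u v → π v u = (π u v)⁻¹) : SimpleGraph (V × Fin q) where
  Adj p p' := G.Adj p.1 p'.1 ∧ p'.2 = π p.1 p'.1 p.2
  symm := ⟨by
    rintro ⟨u, i⟩ ⟨v, j⟩ ⟨hadj, hj⟩
    refine ⟨hadj.symm, ?_⟩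
    simp only at hj ⊢
    rw [hπ u v hadj, hj]
    simp⟩
  loopless := ⟨by
    rintro ⟨u, i⟩ ⟨hadj, _⟩
    exact G.loopless.irrefl u hadj⟩

/-- The fraction of the edges of `G` that are satisfied by the assignment `ψ`
in the Unique Label Cover instance `(G, q, π)`: an edge `{u,v}` is satisfied
if `ψ v = π u v (ψ u)`. -/
def ulcSatFrac [Fintype V] (G : SimpleGraph V) {q : ℕ}
    (π : V → V → Equiv.Perm (Fin q)) (ψ : V → Fin q) : ℝ :=
  (((Finset.univ : Finset (V × V)).filter
      fun p => G.Adj p.1 p.2 ∧ ψ p.2 = π p.1 p.2 (ψ p.1)).card : ℝ)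
    / eB G Set.univ Set.univ

open Finset

section Graph

variable [Fintype V] (G : SimpleGraph V)

lemma deg_nonneg (v : V) : 0 ≤ deg G v :=
  Nat.cast_nonneg _

lemma eB_nonneg (S T : Set V) : 0 ≤ eB G S T :=
  Nat.cast_nonneg _

lemma vol_nonneg (S : Set V) : 0 ≤ vol G S :=
  sum_nonneg fun v _ => deg_nonneg G v

lemma cond_nonneg (S : Set V) : 0 ≤ cond G S :=
  div_nonneg (eB_nonneg G S Sᶜ) (vol_nonneg G S)

lemma vol_mono {S T : Set V} (h : S ⊆ T) : vol G S ≤ vol G T :=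
  sum_le_sum_of_subset_of_nonneg (monotone_filter_right _ fun _ _ hv => h hv)
    fun v _ _ => deg_nonneg G v

lemma deg_le_vol {S : Set V} {v : V} (hv : v ∈ S) : deg G v ≤ vol G S :=
  single_le_sum (fun u _ => deg_nonneg G u) (by simpa using hv)

lemma nonempty_of_vol_pos {S : Set V} (h : 0 < vol G S) : S.Nonempty := by
  by_contra hS
  rw [Set.not_nonempty_iff_eq_empty] at hS
  simp [hS, vol] at h

lemma vol_compl (S : Set V) : vol G Sᶜ = vol G Set.univ - vol G S := by
  have h := sum_filter_add_sum_filter_not univ (· ∈ S) (deg G)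
  simp only [vol, Set.mem_compl_iff, Set.mem_univ, filter_true]
  linarith

lemma eB_comm (S T : Set V) : eB G S T = eB G T S := by
  unfold eB
  norm_cast
  refine card_nbij' Prod.swap Prod.swap ?_ ?_ (fun _ _ => rfl) (fun _ _ => rfl) <;>
    simp +contextual [Set.MapsTo, G.adj_comm]

lemma conductance_nonneg : 0 ≤ conductance G :=
  Real.sInf_nonneg <| by
    rintro x ⟨S, -, -, rfl⟩
    exact cond_nonneg G S

lemma conductance_le_cond {S : Set V} (hS : S.Nonempty) (hvol : vol G S ≤ vol G Set.univ / 2) :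
    conductance G ≤ cond G S :=
  csInf_le ⟨0, by rintro x ⟨T, -, -, rfl⟩; exact cond_nonneg G T⟩ ⟨S, hS, hvol, rfl⟩

lemma conductance_mul_vol_le_eB {S : Set V} (hvol : vol G S ≤ vol G Set.univ / 2) :
    conductance G * vol G S ≤ eB G S Sᶜ := by
  rcases (vol_nonneg G S).eq_or_lt with h0 | hpos
  · rw [← h0, mul_zero]
    exact eB_nonneg G S Sᶜ
  · have h := conductance_le_cond G (nonempty_of_vol_pos G hpos) hvol
    rwa [cond, le_div_iff₀ hpos] at h

lemma conductance_mul_le_eB {S : Set V} {x : ℝ} (hxS : x ≤ vol G S) (hxSc : x ≤ vol G Sᶜ) :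
    conductance G * x ≤ eB G S Sᶜ := by
  rcases le_total (vol G S) (vol G Set.univ / 2) with h | h
  · exact (mul_le_mul_of_nonneg_left hxS (conductance_nonneg G)).trans
      (conductance_mul_vol_le_eB G h)
  · have hc : vol G Sᶜ ≤ vol G Set.univ / 2 := by
      rw [vol_compl]
      linarith
    have hcut := conductance_mul_vol_le_eB G hc
    rw [compl_compl, eB_comm] at hcut
    exact (mul_le_mul_of_nonneg_left hxSc (conductance_nonneg G)).trans hcut

end Graph

section LabelExtended

variable (G : SimpleGraph V) {q : ℕ} (π : V → V → Equiv.Perm (Fin q))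
  (hπ : ∀ u v, G.Adj u v → π v u = (π u v)⁻¹)

@[simp]
lemma ulcExt_adj {p p' : V × Fin q} :
    (ulcExt G π hπ).Adj p p' ↔ G.Adj p.1 p'.1 ∧ p'.2 = π p.1 p'.1 p.2 :=
  Iff.rfl

variable [Fintype V]

lemma deg_ulcExt (p : V × Fin q) : deg (ulcExt G π hπ) p = deg G p.1 := by
  unfold deg
  norm_cast
  refine card_nbij' Prod.fst (fun v => (v, π p.1 v p.2)) ?_ ?_ ?_ (fun _ _ => rfl) <;>
    simp +contextual [Set.MapsTo, Set.LeftInvOn]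

lemma vol_ulcExt_prod_univ (S : Set V) :
    vol (ulcExt G π hπ) (S ×ˢ Set.univ) = q * vol G S := by
  simp only [vol, sum_filter, Fintype.sum_prod_type, Set.mem_prod, Set.mem_univ, and_true,
    deg_ulcExt, mul_sum]
  refine sum_congr rfl fun u _ => ?_
  split_ifs <;> simp

lemma vol_ulcExt_univ : vol (ulcExt G π hπ) Set.univ = q * vol G Set.univ := by
  rw [← vol_ulcExt_prod_univ, Set.univ_prod_univ]

lemma vol_image_fst_le (S' : Set (V × Fin q)) :
    vol G (Prod.fst '' S') ≤ vol (ulcExt G π hπ) S' := by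
  have himage : univ.filter (· ∈ Prod.fst '' S') = (univ.filter (· ∈ S')).image Prod.fst := by
    ext
    simp
  calc vol G (Prod.fst '' S')
      = ∑ u ∈ (univ.filter (· ∈ S')).image Prod.fst, deg G u := by rw [vol, himage]
    _ ≤ ∑ p ∈ univ.filter (· ∈ S'), deg G p.1 :=
        sum_image_le_of_nonneg fun u _ => deg_nonneg G u
    _ = vol (ulcExt G π hπ) S' := by simp only [vol, deg_ulcExt]

lemma vol_ulcExt_le (S' : Set (V × Fin q)) :
    vol (ulcExt G π hπ) S' ≤ q * vol G (Prod.fst '' S') := by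
  rw [← vol_ulcExt_prod_univ]
  exact vol_mono _ fun p hp => ⟨Set.mem_image_of_mem _ hp, Set.mem_univ _⟩

lemma eB_image_fst_le (S' : Set (V × Fin q)) :
    eB G (Prod.fst '' S') (Prod.fst '' S')ᶜ ≤ eB (ulcExt G π hπ) S' S'ᶜ := by
  unfold eB
  refine Nat.cast_le.mpr (card_le_card_of_surjOn (Prod.map Prod.fst Prod.fst) ?_)
  rintro ⟨u, v⟩ h
  simp only [coe_filter, mem_univ, true_and, Set.mem_ofPred_eq] at h
  obtain ⟨⟨⟨u, i⟩, hi, rfl⟩, hv, huv⟩ := h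
  refine ⟨((u, i), (v, π u v i)), ?_, rfl⟩
  simp only [coe_filter, mem_univ, true_and, Set.mem_ofPred_eq, Set.mem_compl_iff]
  exact ⟨hi, fun hvi => hv ⟨_, hvi, rfl⟩, huv, rfl⟩

lemma conductance_div_le_cond_ulcExt (hdeg : ∀ v, 1 ≤ deg G v) {S' : Set (V × Fin q)}
    (hne : S'.Nonempty)
    (hvol : vol (ulcExt G π hπ) S' ≤ vol (ulcExt G π hπ) Set.univ / (q + 1)) :
    conductance G / q ≤ cond (ulcExt G π hπ) S' := by
  obtain ⟨p, hp⟩ := hne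
  have hq : (0 : ℝ) < q := by exact_mod_cast p.2.pos
  set S := Prod.fst '' S'
  set m := vol (ulcExt G π hπ) S'
  have hm : 0 < m := by
    have := deg_le_vol (ulcExt G π hπ) hp
    rw [deg_ulcExt] at this
    linarith [hdeg p.1]
  have hmS : m / q ≤ vol G S := by
    rw [div_le_iff₀' hq]
    exact vol_ulcExt_le G π hπ S'
  have hmSc : m / q ≤ vol G Sᶜ := by
    have hSm : q * vol G S ≤ q * m := by gcongr; exact vol_image_fst_le G π hπ S'
    rw [vol_ulcExt_univ, le_div_iff₀ (by positivity)] at hvol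
    rw [vol_compl, div_le_iff₀ hq]
    linarith
  calc conductance G / q = conductance G * (m / q) / m := by field_simp
    _ ≤ eB G S Sᶜ / m := by gcongr; exact conductance_mul_le_eB G hmS hmSc
    _ ≤ eB (ulcExt G π hπ) S' S'ᶜ / m := by gcongr; exact eB_image_fst_le G π hπ S'

end LabelExtended

theorem ulc_label_extended_expansion_general
    {V : Type*} [Fintype V] (G : SimpleGraph V)
    (hdeg : ∀ v, 1 ≤ deg G v)
    (q : ℕ)
    (π : V → V → Equiv.Perm (Fin q))
    (hπ : ∀ u v, G.Adj u v → π v u = (π u v)⁻¹)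
    (φ : ℝ) (hcond : φ ≤ conductance G) :
    ∀ S' : Set (V × Fin q), S'.Nonempty →
      vol (ulcExt G π hπ) S' ≤ vol (ulcExt G π hπ) Set.univ / (q + 1) →
      φ / (q * (q + 1)) ≤ cond (ulcExt G π hπ) S' := by
  intro S' hne hvol
  have hq : (0 : ℝ) < q := by exact_mod_cast hne.some.2.pos
  calc φ / (q * (q + 1)) ≤ conductance G / (q * (q + 1)) := by gcongr
    _ ≤ conductance G / q :=
        div_le_div_of_nonneg_left (conductance_nonneg G) hq (by nlinarith)
    _ ≤ cond (ulcExt G π hπ) S' := conductance_div_le_cond_ulcExt G π hπ hdeg hne hvol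

/-- If `I = (G,q,π)` is a Unique Label Cover instance with
`φ_G ≥ φ > 0` and `G'` is its label-extended graph, then every nonempty set `S'`
of vertices of `G'` with `μ_{G'}(S') ≤ μ_{G'}/(q+1)` has conductance at least
`φ/(q(q+1))`; that is, `φ_{G'}(q+1) ≥ φ/(q(q+1))`. -/
theorem ulc_label_extended_expansion
    {V : Type*} [Fintype V] (G : SimpleGraph V)
    (hdeg : ∀ v, 1 ≤ deg G v)
    (q : ℕ) (hq : 1 ≤ q)
    (π : V → V → Equiv.Perm (Fin q))
    (hπ : ∀ u v, G.Adj u v → π v u = (π u v)⁻¹)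
    (φ : ℝ) (hφ : 0 < φ) (hcond : φ ≤ conductance G) :
    ∀ S' : Set (V × Fin q), S'.Nonempty →
      vol (ulcExt G π hπ) S' ≤ vol (ulcExt G π hπ) Set.univ / (q + 1) →
      φ / (q * (q + 1)) ≤ cond (ulcExt G π hπ) S' :=
  ulc_label_extended_expansion_general G hdeg q π hπ φ hcond

end Sublinear
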